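/- arXiv:2109.00230 — 5 statements merged into one kernel-verified Lean document; each statement's English description precedes it below -/
import Mathlib

section
/- Let H be a complex Hilbert space and let (P n)_{n∈ℕ} be a family of continuous linear maps on H such that each P n is a self-adjoint idempotent (orthogonal projection), P m ∘ P n = 0 whenever m ≠ n, and for every x ∈ H the series ∑_{n} P n x converges to x. Let C > 0, p > 0, and let G : H →L H be a continuous linear map with G ∘ P n = P (n+1) ∘ G ∘ P n and ‖G ∘ P n‖ ≤ C·(n+1)^{-p} for every n ∈ ℕ. Then for every k ∈ ℕ the operator norm of the k-th power satisfies ‖G^k‖ ≤ C^k · (k!)^{-p}. -/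
/-!
`G ^ k` maps the `n`-th sector into the `(n + k)`-th one, and on that sector it factors through
the blocks `G P (n + j)`, `j < k`; hence `‖G ^ k P n‖ ≤ C ^ k ∏ (n + j + 1) ^ (-p) ≤ C ^ k (k!) ^ (-p)`.
As `G ^ k` sends mutually orthogonal sectors to mutually orthogonal sectors, Pythagoras shows that
`‖G ^ k‖` is bounded by the supremum of its block norms.
-/

open Finset
open scoped InnerProductSpace Nat

section Pythagoras

variable {𝕜 E ι : Type*} [RCLike 𝕜] [NormedAddCommGroup E] [InnerProductSpace 𝕜 E]

theorem norm_sum_sq_of_pairwise_inner_eq_zero {f : ι → E}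
    (hf : Pairwise fun i j => ⟪f i, f j⟫_𝕜 = 0) (s : Finset ι) :
    ‖∑ i ∈ s, f i‖ ^ 2 = ∑ i ∈ s, ‖f i‖ ^ 2 := by
  classical
  induction s using Finset.induction_on with
  | empty => simp
  | insert a s ha ih =>
    have horth : ⟪f a, ∑ i ∈ s, f i⟫_𝕜 = 0 :=
      (inner_sum _ _ _).trans <| sum_eq_zero fun i hi => hf (ne_of_mem_of_not_mem hi ha).symm
    rw [sum_insert ha, sum_insert ha, ← ih, sq, sq, sq,
      norm_add_sq_eq_norm_sq_add_norm_sq_of_inner_eq_zero _ _ horth]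

theorem HasSum.norm_sq_of_pairwise_inner_eq_zero {f : ι → E} {a : E}
    (hf : Pairwise fun i j => ⟪f i, f j⟫_𝕜 = 0) (h : HasSum f a) :
    HasSum (fun i => ‖f i‖ ^ 2) (‖a‖ ^ 2) := by
  simpa only [HasSum, norm_sum_sq_of_pairwise_inner_eq_zero hf] using h.norm.pow 2

end Pythagoras

structure IsOrthogonalGrading {𝕜 E ι : Type*} [RCLike 𝕜] [NormedAddCommGroup E]
    [InnerProductSpace 𝕜 E] [CompleteSpace E] (P : ι → E →L[𝕜] E) : Prop where
  isStarProjection : ∀ i, IsStarProjection (P i)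
  mul_eq_zero : Pairwise fun i j => P i * P j = 0
  hasSum : ∀ x, HasSum (fun i => P i x) x

namespace IsOrthogonalGrading

variable {𝕜 E ι : Type*} [RCLike 𝕜] [NormedAddCommGroup E] [InnerProductSpace 𝕜 E]
  [CompleteSpace E] {P : ι → E →L[𝕜] E} (hP : IsOrthogonalGrading P)
include hP

theorem norm_le_one (i : ι) : ‖P i‖ ≤ 1 :=
  (hP.isStarProjection i).norm_le

theorem inner_apply_apply_eq_zero {i j : ι} (hij : i ≠ j) (x y : E) :
    ⟪P i x, P j y⟫_𝕜 = 0 := by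
  rw [← ContinuousLinearMap.adjoint_inner_right, (hP.isStarProjection i).isSelfAdjoint.adjoint_eq,
    ← mul_apply_eq_comp, hP.mul_eq_zero hij, zero_apply, inner_zero_right]

theorem apply_apply (i : ι) (x : E) : P i (P i x) = P i x :=
  congr($((hP.isStarProjection i).isIdempotentElem.eq) x)

/-- Pythagoras on both sides: `T` keeps distinct blocks orthogonal since `σ` is injective. -/
theorem opNorm_le_of_mul_eq {T : E →L[𝕜] E} {σ : ι → ι} (hσ : σ.Injective)
    (hT : ∀ i, T * P i = P (σ i) * (T * P i)) {M : ℝ} (hM₀ : 0 ≤ M)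
    (hM : ∀ i, ‖T * P i‖ ≤ M) : ‖T‖ ≤ M := by
  refine T.opNorm_le_bound hM₀ fun x => ?_
  have hblock : ∀ i, T (P i x) = P (σ i) (T (P i x)) := fun i => congr($(hT i) x)
  have hx := (hP.hasSum x).norm_sq_of_pairwise_inner_eq_zero
    fun i j hij => hP.inner_apply_apply_eq_zero hij x x
  have hTx := (T.hasSum (hP.hasSum x)).norm_sq_of_pairwise_inner_eq_zero (𝕜 := 𝕜)
    fun i j hij => by
      dsimp only
      rw [hblock i, hblock j]
      exact hP.inner_apply_apply_eq_zero (hσ.ne hij) _ _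
  have hterm : ∀ i, ‖T (P i x)‖ ^ 2 ≤ M ^ 2 * ‖P i x‖ ^ 2 := fun i => by
    rw [← mul_pow]
    gcongr
    calc ‖T (P i x)‖ = ‖(T * P i) (P i x)‖ := by rw [mul_apply_eq_comp, hP.apply_apply]
      _ ≤ M * ‖P i x‖ := (T * P i).le_of_opNorm_le (hM i) _
  rw [← pow_le_pow_iff_left₀ (norm_nonneg _) (by positivity) two_ne_zero, mul_pow]
  exact hasSum_le hterm hTx (hx.mul_left _)

end IsOrthogonalGrading

section Shift

variable {M : Type*} [Monoid M] {g : M} {p : ℕ → M}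

theorem pow_succ_mul_eq_of_mul_eq (hg : ∀ n, g * p n = p (n + 1) * (g * p n)) (k n : ℕ) :
    g ^ (k + 1) * p n = g ^ k * p (n + 1) * (g * p n) := by
  rw [pow_succ, mul_assoc, mul_assoc, ← hg]

theorem pow_mul_eq_mul_pow_mul_of_mul_eq (hg : ∀ n, g * p n = p (n + 1) * (g * p n))
    (hp : ∀ n, IsIdempotentElem (p n)) (k n : ℕ) :
    g ^ k * p n = p (n + k) * (g ^ k * p n) := by
  induction k generalizing n with
  | zero => simpa using (hp n).eq.symm
  | succ k ih =>
    calc g ^ (k + 1) * p n = p (n + 1 + k) * (g ^ k * p (n + 1)) * (g * p n) := by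
          rw [pow_succ_mul_eq_of_mul_eq hg, ← ih]
      _ = p (n + (k + 1)) * (g ^ (k + 1) * p n) := by
          rw [pow_succ_mul_eq_of_mul_eq hg, add_right_comm, add_assoc, mul_assoc, mul_assoc]

end Shift

theorem norm_pow_mul_le_prod_of_mul_eq {R : Type*} [SeminormedRing R] {g : R} {p : ℕ → R}
    (hg : ∀ n, g * p n = p (n + 1) * (g * p n)) (hp : ∀ n, ‖p n‖ ≤ 1) (k n : ℕ) :
    ‖g ^ k * p n‖ ≤ ∏ j ∈ range k, ‖g * p (n + j)‖ := by
  induction k generalizing n with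
  | zero => simpa using hp n
  | succ k ih =>
    calc ‖g ^ (k + 1) * p n‖ ≤ ‖g ^ k * p (n + 1)‖ * ‖g * p n‖ := by
          rw [pow_succ_mul_eq_of_mul_eq hg]; exact norm_mul_le _ _
      _ ≤ (∏ j ∈ range k, ‖g * p (n + 1 + j)‖) * ‖g * p n‖ := by gcongr; exact ih (n + 1)
      _ = ∏ j ∈ range (k + 1), ‖g * p (n + j)‖ := by
          rw [prod_range_succ']
          simp only [add_assoc, add_comm 1, add_zero]

theorem prod_rpow_neg_le_factorial_rpow_neg {p : ℝ} (hp : 0 ≤ p) (k n : ℕ) :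
    ∏ j ∈ range k, ((n + j : ℕ) + 1 : ℝ) ^ (-p) ≤ (k ! : ℝ) ^ (-p) := by
  rw [← prod_range_add_one_eq_factorial, Nat.cast_prod,
    Real.finsetProd_rpow _ _ fun j _ => by positivity]
  refine Real.rpow_le_rpow_of_nonpos (by positivity) ?_ (neg_nonpos.2 hp)
  exact prod_le_prod (fun j _ => by positivity) fun j _ => by push_cast; linarith

/-- If `(P n)` is a family of orthogonal projections on a complex Hilbert space `H` with
mutually orthogonal ranges summing up to the identity, and `G` is a bounded operator raising
the grading by one with `‖G ∘ P n‖ ≤ C (n+1)^(-p)`, then `‖G^k‖ ≤ C^k (k!)^(-p)`. -/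
theorem stmt_0 {H : Type*} [NormedAddCommGroup H] [InnerProductSpace ℂ H] [CompleteSpace H]
    (P : ℕ → H →L[ℂ] H)
    (hsa : ∀ n, IsSelfAdjoint (P n))
    (hidem : ∀ n, P n ∘L P n = P n)
    (horth : ∀ m n, m ≠ n → P m ∘L P n = 0)
    (hsum : ∀ x : H, HasSum (fun n => P n x) x)
    (C p : ℝ) (hC : 0 < C) (hp : 0 < p)
    (G : H →L[ℂ] H)
    (hGP : ∀ n, G ∘L P n = P (n + 1) ∘L (G ∘L P n))
    (hGnorm : ∀ n, ‖G ∘L P n‖ ≤ C * ((n : ℝ) + 1) ^ (-p)) :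
    ∀ k : ℕ, ‖G ^ k‖ ≤ C ^ k * (k.factorial : ℝ) ^ (-p) := by
  intro k
  have hP : IsOrthogonalGrading P := ⟨fun n => ⟨hidem n, hsa n⟩, horth, hsum⟩
  refine hP.opNorm_le_of_mul_eq (add_left_injective k)
    (pow_mul_eq_mul_pow_mul_of_mul_eq hGP hidem k) (by positivity) fun n => ?_
  calc ‖G ^ k * P n‖ ≤ ∏ j ∈ range k, ‖G * P (n + j)‖ :=
        norm_pow_mul_le_prod_of_mul_eq hGP hP.norm_le_one k n
    _ ≤ ∏ j ∈ range k, C * ((n + j : ℕ) + 1 : ℝ) ^ (-p) :=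
        prod_le_prod (fun _ _ => norm_nonneg _) fun j _ => hGnorm (n + j)
    _ = C ^ k * ∏ j ∈ range k, ((n + j : ℕ) + 1 : ℝ) ^ (-p) := by
        rw [prod_mul_distrib, prod_const, card_range]
    _ ≤ C ^ k * (k ! : ℝ) ^ (-p) := by
        gcongr
        exact prod_rpow_neg_le_factorial_rpow_neg hp.le k n
end

section
/- Let H be a complex Hilbert space, let A be a densely defined unbounded operator on H (a linear partial map H →ₗ. H) that is self-adjoint, i.e. A coincides with its adjoint A*, and let B : H ≃L H be a continuous linear equivalence (a bounded bijection with bounded inverse) with Hilbert-space adjoint B*. Define the operator S with domain D(S) = {x ∈ H : B x ∈ D(A)} by S x = B*(A(B x)). Then S is densely defined and self-adjoint, i.e. S* = S. -/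
open ContinuousLinearMap

local notation "⟪" x ", " y "⟫" => @inner ℂ _ _ x y

/-- If `A` is a densely defined self-adjoint operator on a complex Hilbert space and
`B` is a continuous linear equivalence, then the operator `S = B* A B` with domain
`{x | B x ∈ D(A)}` is densely defined and self-adjoint. -/
theorem stmt_4 {H : Type*} [NormedAddCommGroup H] [InnerProductSpace ℂ H] [CompleteSpace H]
    (A : H →ₗ.[ℂ] H) (hAdense : Dense (A.domain : Set H)) (hA : A.adjoint = A)
    (B : H ≃L[ℂ] H)
    (S : H →ₗ.[ℂ] H)
    (hSdom : S.domain = Submodule.comap ((B : H →L[ℂ] H) : H →ₗ[ℂ] H) A.domain)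
    (hS : ∀ (x : H) (hx : x ∈ S.domain) (hBx : B x ∈ A.domain),
      S ⟨x, hx⟩ = ContinuousLinearMap.adjoint (B : H →L[ℂ] H) (A ⟨B x, hBx⟩)) :
    Dense (S.domain : Set H) ∧ S.adjoint = S := by
  have hmem : ∀ x : H, x ∈ S.domain ↔ B x ∈ A.domain := by
    intro x; rw [hSdom]; rfl
  have hSdense : Dense (S.domain : Set H) := by
    have : (S.domain : Set H) = (B : H → H) ⁻¹' (A.domain : Set H) := by
      rw [hSdom]; rfl
    rw [this]
    exact hAdense.preimage B.toHomeomorph.isOpenMap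
  refine ⟨hSdense, ?_⟩
  -- A is symmetric
  have hAle : A ≤ A.adjoint := le_of_eq hA.symm
  have hAsym : ∀ (u v : A.domain), ⟪(A u : H), (v : H)⟫ = ⟪(u : H), (A v : H)⟫ := by
    intro u v
    have hu' : (u : H) ∈ A.adjoint.domain := hAle.1 u.2
    have := LinearPMap.adjoint_isFormalAdjoint hAdense ⟨(u : H), hu'⟩ v
    rwa [← hAle.2 (x := u) (y := ⟨(u : H), hu'⟩) rfl] at this
  -- S is a formal adjoint of itself
  have hform : S.IsFormalAdjoint S := by
    intro x y
    have hBx : B (x : H) ∈ A.domain := (hmem x).1 x.2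
    have hBy : B (y : H) ∈ A.domain := (hmem y).1 y.2
    have hx' : S x = adjoint (B : H →L[ℂ] H) (A ⟨B x, hBx⟩) := by
      rw [← hS x x.2 hBx]
    have hy' : S y = adjoint (B : H →L[ℂ] H) (A ⟨B y, hBy⟩) := by
      rw [← hS y y.2 hBy]
    rw [hx', hy', adjoint_inner_left, adjoint_inner_right]
    exact hAsym ⟨B x, hBx⟩ ⟨B y, hBy⟩
  have hle : S ≤ S.adjoint := hform.le_adjoint hSdense
  refine le_antisymm ?_ hle
  -- reverse inclusion
  have hdom : ∀ y : H, y ∈ S.adjoint.domain → y ∈ S.domain := by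
    intro y hy
    set z := S.adjoint ⟨y, hy⟩ with hz
    rw [hmem, ← hA]
    apply LinearPMap.mem_adjoint_domain_of_exists
    refine ⟨adjoint ((B.symm : H →L[ℂ] H)) z, fun u => ?_⟩
    have hx : (B.symm (u : H)) ∈ S.domain := by
      rw [hmem]; simp [u.2]
    have hBx : B (B.symm (u : H)) ∈ A.domain := by simp [u.2]
    have h1 : S ⟨B.symm (u : H), hx⟩ = adjoint (B : H →L[ℂ] H) (A ⟨B (B.symm (u : H)), hBx⟩) :=
      hS _ hx hBx
    have h2 := LinearPMap.adjoint_isFormalAdjoint hSdense ⟨y, hy⟩ ⟨B.symm (u : H), hx⟩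
    rw [h1, adjoint_inner_right] at h2
    rw [adjoint_inner_left]
    calc ⟪z, B.symm (u : H)⟫ = ⟪B y, (A ⟨B (B.symm (u : H)), hBx⟩ : H)⟫ := h2
      _ = ⟪B y, (A u : H)⟫ := by
            have : (⟨B (B.symm (u : H)), hBx⟩ : A.domain) = u := Subtype.ext (B.apply_symm_apply _)
            rw [this]
  refine ⟨hdom, ?_⟩
  intro x y hxy
  -- x : S.adjoint.domain, y : S.domain, (x:H) = (y:H); show S.adjoint x = S y
  have hBy : B (y : H) ∈ A.domain := (hmem y).1 y.2
  set z := S.adjoint x with hz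
  -- show A (B y) = adjoint B.symm z
  have hABy : (A ⟨B (y : H), hBy⟩ : H) = adjoint ((B.symm : H →L[ℂ] H)) z := by
    have hBy' : B (y : H) ∈ A.adjoint.domain := by rw [hA]; exact hBy
    have key : A.adjoint ⟨B (y : H), hBy'⟩ = adjoint ((B.symm : H →L[ℂ] H)) z := by
      apply LinearPMap.adjoint_apply_eq hAdense
      intro u
      have hx' : (B.symm (u : H)) ∈ S.domain := by rw [hmem]; simp [u.2]
      have hBx : B (B.symm (u : H)) ∈ A.domain := by simp [u.2]
      have h1 : S ⟨B.symm (u : H), hx'⟩ = adjoint (B : H →L[ℂ] H) (A ⟨B (B.symm (u : H)), hBx⟩) :=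
        hS _ hx' hBx
      have h2 := LinearPMap.adjoint_isFormalAdjoint hSdense x ⟨B.symm (u : H), hx'⟩
      rw [h1, adjoint_inner_right] at h2
      rw [adjoint_inner_left]
      calc ⟪z, B.symm (u : H)⟫ = ⟪B (x : H), (A ⟨B (B.symm (u : H)), hBx⟩ : H)⟫ := h2
        _ = ⟪B (y : H), (A u : H)⟫ := by
            have : (⟨B (B.symm (u : H)), hBx⟩ : A.domain) = u := Subtype.ext (B.apply_symm_apply _)
            rw [hxy, this]
    have hAeq : A ⟨B (y : H), hBy⟩ = A.adjoint ⟨B (y : H), hBy'⟩ := by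
      exact ((le_of_eq hA).2 (x := ⟨B (y : H), hBy'⟩) (y := ⟨B (y : H), hBy⟩) rfl).symm
    rw [hAeq, key]
  have hSy : S y = adjoint (B : H →L[ℂ] H) (A ⟨B (y : H), hBy⟩) := hS _ y.2 hBy
  rw [hSy, hABy, ← ContinuousLinearMap.comp_apply, ← adjoint_comp]
  have : ((B.symm : H →L[ℂ] H).comp (B : H →L[ℂ] H)) = ContinuousLinearMap.id ℂ H := by
    ext v; simp
  rw [this, adjoint_id, ContinuousLinearMap.id_apply]
end

section
/- For every real p with 0 ≤ p < 1/2 and every ε with 0 < ε ≤ 1 − 2p, there exists a constant C > 0 such that for all Ξ ∈ ℝ³ and all real a ≥ 1: ∫_{ℝ³} |ξ|^{-1} · (|Ξ−ξ|² + |ξ| + a)^{2p−2} dξ ≤ C · a^{2p−1+ε}. -/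
/-!
Write `B = |Ξ - ξ|² + |ξ| + a ≥ 1` and split `B^(2p-2) = B^(2p-1+ε) · B^(-ε) · B^(-1)`. Since the
first exponent is `≤ 0` and `B ≥ a`, `B ≥ 1 + |ξ|`, `B ≥ 1 + |Ξ - ξ|²`, the integral is at most
`a^(2p-1+ε)` times the convolution of `|ξ|⁻¹ (1 + |ξ|)^(-ε)` with `(1 + |η|²)⁻¹` at `Ξ`. Hölder's
inequality with exponents `6/(2+ε)` and `6/(4-ε)` bounds this convolution uniformly in `Ξ`: both
functions lie in the respective Lebesgue spaces on `ℝ³`.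
-/

open MeasureTheory

open Metric Module
open scoped ENNReal

theorem lintegral_mul_comp_sub_le_Lp_mul_Lq {G : Type*} [MeasurableSpace G] [AddGroup G]
    [MeasurableAdd G] [MeasurableNeg G] (μ : Measure G) [μ.IsAddLeftInvariant] [μ.IsNegInvariant]
    {p q : ℝ} (hpq : p.HolderConjugate q) {f g : G → ℝ≥0∞} (hf : AEMeasurable f μ)
    (hg : Measurable g) (x : G) :
    ∫⁻ y, f y * g (x - y) ∂μ ≤ (∫⁻ y, f y ^ p ∂μ) ^ (1 / p) * (∫⁻ y, g y ^ q ∂μ) ^ (1 / q) := by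
  have hg' : AEMeasurable (fun y => g (x - y)) μ := by
    simp_rw [sub_eq_add_neg]
    exact (hg.comp ((measurable_const_add x).comp measurable_neg)).aemeasurable
  calc ∫⁻ y, f y * g (x - y) ∂μ
      ≤ (∫⁻ y, f y ^ p ∂μ) ^ (1 / p) * (∫⁻ y, g (x - y) ^ q ∂μ) ^ (1 / q) :=
        ENNReal.lintegral_mul_le_Lp_mul_Lq μ hpq hf hg'
    _ = (∫⁻ y, f y ^ p ∂μ) ^ (1 / p) * (∫⁻ y, g y ^ q ∂μ) ^ (1 / q) := by
        rw [lintegral_sub_left_eq_self (fun y => g y ^ q) x]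

theorem lintegral_ofReal_rpow_lt_top {α : Type*} [MeasurableSpace α] {μ : Measure α}
    {f : α → ℝ} {q : ℝ} (hf : 0 ≤ f) (hq : 0 ≤ q) (hfq : Integrable (fun x => f x ^ q) μ) :
    ∫⁻ x, ENNReal.ofReal (f x) ^ q ∂μ < ∞ := by
  simp_rw [ENNReal.ofReal_rpow_of_nonneg (hf _) hq]
  exact hfq.lintegral_lt_top

theorem rpow_two_mul_sub_two_le {X r a p ε : ℝ} (hr : 0 ≤ r) (ha : 1 ≤ a) (hε : 0 ≤ ε)
    (hεp : ε ≤ 1 - 2 * p) :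
    (X ^ 2 + r + a) ^ (2 * p - 2) ≤ a ^ (2 * p - 1 + ε) * ((1 + r) ^ (-ε) * (1 + X ^ 2)⁻¹) := by
  have hX := sq_nonneg X
  have hB : 0 < X ^ 2 + r + a := by linarith
  have h_split : (X ^ 2 + r + a) ^ (2 * p - 2) = (X ^ 2 + r + a) ^ (2 * p - 1 + ε) *
      ((X ^ 2 + r + a) ^ (-ε) * (X ^ 2 + r + a) ^ (-1 : ℝ)) := by
    rw [← Real.rpow_add hB, ← Real.rpow_add hB]
    ring_nf
  rw [h_split, Real.rpow_neg_one]
  gcongr ?_ * (?_ * ?_)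
  · exact Real.rpow_le_rpow_of_nonpos (by linarith) (by linarith) (by linarith)
  · exact Real.rpow_le_rpow_of_nonpos (by linarith) (by linarith) (by linarith)
  · exact inv_anti₀ (by positivity) (by linarith)

section Weights

variable {E : Type*} [NormedAddCommGroup E] [NormedSpace ℝ E] [FiniteDimensional ℝ E]
  [MeasurableSpace E] [BorelSpace E] (μ : Measure E) [μ.IsAddHaarMeasure]

theorem integrable_rpow_neg_norm_mul_rpow_neg_one_add_norm {b c : ℝ} (hb : 0 ≤ b)
    (hbE : b < finrank ℝ E) (hbcE : finrank ℝ E < b + c) :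
    Integrable (fun x : E => ‖x‖ ^ (-b) * (1 + ‖x‖) ^ (-c)) μ := by
  have hc : 0 ≤ c := by linarith
  have hmeas : AEStronglyMeasurable (fun x : E => ‖x‖ ^ (-b) * (1 + ‖x‖) ^ (-c)) μ :=
    Measurable.aestronglyMeasurable (by fun_prop)
  have hE : 1 ≤ finrank ℝ E := by
    have : (0 : ℝ) < finrank ℝ E := hb.trans_lt hbE
    exact_mod_cast this
  have h_ball : IntegrableOn (fun x : E => ‖x‖ ^ (-b) * (1 + ‖x‖) ^ (-c)) (ball 0 1) μ := by
    refine integrableOn_ball_of_norm_le_rpow (C := 1) hE hbE (ae_of_all _ fun x => ?_) hmeas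
    rw [one_mul, Real.norm_of_nonneg (by positivity)]
    exact mul_le_of_le_one_right (by positivity)
      (Real.rpow_le_one_of_one_le_of_nonpos (by simp) (by linarith))
  have h_far : IntegrableOn (fun x : E => ‖x‖ ^ (-b) * (1 + ‖x‖) ^ (-c)) (ball 0 1)ᶜ μ := by
    refine (((integrable_one_add_norm hbcE).const_mul (2 ^ b)).integrableOn).mono' hmeas.restrict
      ((ae_restrict_iff' measurableSet_ball.compl).2 (ae_of_all _ fun x hx => ?_))
    have hx1 : 1 ≤ ‖x‖ := by simpa using hx
    rw [Real.norm_of_nonneg (by positivity), Real.rpow_neg (by positivity) (b + c),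
      Real.rpow_add (by positivity), mul_inv, ← mul_assoc, ← Real.rpow_neg (by positivity),
      ← Real.rpow_neg (by positivity)]
    gcongr
    calc ‖x‖ ^ (-b) ≤ ((1 + ‖x‖) / 2) ^ (-b) :=
          Real.rpow_le_rpow_of_nonpos (by positivity) (by linarith) (by linarith)
      _ = 2 ^ b * (1 + ‖x‖) ^ (-b) := by
          rw [Real.div_rpow (by positivity) (by norm_num), Real.rpow_neg (by norm_num : (0:ℝ) ≤ 2)]
          field_simp
  simpa using h_ball.union h_far

theorem exists_lintegral_weight_mul_comp_sub_le (hE : finrank ℝ E = 3) {ε : ℝ} (hε : 0 < ε)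
    (hε4 : ε < 4) :
    ∃ K : ℝ, 0 < K ∧ ∀ x : E,
      ∫⁻ y, ENNReal.ofReal (‖y‖⁻¹ * (1 + ‖y‖) ^ (-ε) * (1 + ‖x - y‖ ^ 2)⁻¹) ∂μ ≤
        ENNReal.ofReal K := by
  set s := (2 + ε) / 6
  set t := (4 - ε) / 6
  have hs : 0 < s := by positivity
  have ht : 0 < t := by simp only [t]; linarith
  have hpq : s⁻¹.HolderConjugate t⁻¹ := .inv_inv hs ht (by simp only [s, t]; ring)
  set f : E → ℝ := fun y => ‖y‖⁻¹ * (1 + ‖y‖) ^ (-ε)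
  set g : E → ℝ := fun y => (1 + ‖y‖ ^ 2)⁻¹
  have hf_fin : ∫⁻ y, ENNReal.ofReal (f y) ^ s⁻¹ ∂μ < ∞ := by
    refine lintegral_ofReal_rpow_lt_top (fun y => by positivity) (by positivity) ?_
    have h_int := integrable_rpow_neg_norm_mul_rpow_neg_one_add_norm μ (b := s⁻¹)
      (c := ε * s⁻¹) (by positivity) ?_ ?_
    · refine h_int.congr (ae_of_all _ fun y => ?_)
      simp only [f]
      rw [Real.mul_rpow (by positivity) (by positivity), Real.inv_rpow (norm_nonneg y),
        ← Real.rpow_neg (norm_nonneg y), ← Real.rpow_mul (by positivity), neg_mul]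
    · rw [hE, Nat.cast_ofNat, inv_lt_comm₀ hs (by norm_num)]
      simp only [s]; linarith
    · rw [hE, Nat.cast_ofNat, ← one_add_mul, lt_mul_inv_iff₀ hs]
      simp only [s]; nlinarith
  have hg_fin : ∫⁻ y, ENNReal.ofReal (g y) ^ t⁻¹ ∂μ < ∞ := by
    refine lintegral_ofReal_rpow_lt_top (fun y => by positivity) (by positivity) ?_
    have h_int := integrable_rpow_neg_one_add_norm_sq (μ := μ) (r := 2 * t⁻¹) ?_
    · refine h_int.congr (ae_of_all _ fun y => ?_)
      simp only [g]
      rw [Real.inv_rpow (by positivity), ← Real.rpow_neg (by positivity)]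
      ring_nf
    · rw [hE, Nat.cast_ofNat, ← div_lt_iff₀' two_pos, lt_inv_comm₀ (by norm_num) ht]
      simp only [t]; linarith
  set N := (∫⁻ y, ENNReal.ofReal (f y) ^ s⁻¹ ∂μ) ^ (1 / s⁻¹) *
    (∫⁻ y, ENNReal.ofReal (g y) ^ t⁻¹ ∂μ) ^ (1 / t⁻¹)
  have hN : N ≠ ∞ := by
    have := hf_fin.ne; have := hg_fin.ne
    simp only [N]; finiteness
  refine ⟨N.toReal + 1, by positivity, fun x => ?_⟩
  calc ∫⁻ y, ENNReal.ofReal (f y * g (x - y)) ∂μ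
      = ∫⁻ y, ENNReal.ofReal (f y) * ENNReal.ofReal (g (x - y)) ∂μ := by
        simp_rw [ENNReal.ofReal_mul (by positivity : 0 ≤ f _)]
    _ ≤ N := lintegral_mul_comp_sub_le_Lp_mul_Lq μ hpq (by fun_prop) (by fun_prop) x
    _ ≤ ENNReal.ofReal (N.toReal + 1) :=
        (ENNReal.le_ofReal_iff_toReal_le hN (by positivity)).2 (by linarith)

end Weights

theorem stmt_8_general (p ε : ℝ) (hp0 : 0 ≤ p) (hε : 0 < ε) (hε' : ε ≤ 1 - 2 * p) :
    ∃ C > 0, ∀ (Ξ : EuclideanSpace ℝ (Fin 3)) (a : ℝ), 1 ≤ a →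
      (∫ ξ : EuclideanSpace ℝ (Fin 3),
          ‖ξ‖⁻¹ * (‖Ξ - ξ‖ ^ 2 + ‖ξ‖ + a) ^ (2 * p - 2)) ≤
        C * a ^ (2 * p - 1 + ε) := by
  obtain ⟨K, hK0, hK⟩ := exists_lintegral_weight_mul_comp_sub_le volume
    finrank_euclideanSpace_fin hε (by linarith)
  refine ⟨K, hK0, fun Ξ a ha => ?_⟩
  have h_pointwise (ξ : EuclideanSpace ℝ (Fin 3)) :
      ENNReal.ofReal ‖‖ξ‖⁻¹ * (‖Ξ - ξ‖ ^ 2 + ‖ξ‖ + a) ^ (2 * p - 2)‖ ≤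
        ENNReal.ofReal (a ^ (2 * p - 1 + ε)) *
          ENNReal.ofReal (‖ξ‖⁻¹ * (1 + ‖ξ‖) ^ (-ε) * (1 + ‖Ξ - ξ‖ ^ 2)⁻¹) := by
    rw [← ENNReal.ofReal_mul (by positivity), Real.norm_of_nonneg (by positivity)]
    refine ENNReal.ofReal_le_ofReal ?_
    calc ‖ξ‖⁻¹ * (‖Ξ - ξ‖ ^ 2 + ‖ξ‖ + a) ^ (2 * p - 2)
        ≤ ‖ξ‖⁻¹ * (a ^ (2 * p - 1 + ε) * ((1 + ‖ξ‖) ^ (-ε) * (1 + ‖Ξ - ξ‖ ^ 2)⁻¹)) := by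
          gcongr; exact rpow_two_mul_sub_two_le (norm_nonneg ξ) ha hε.le hε'
      _ = _ := by ring
  calc ∫ ξ, ‖ξ‖⁻¹ * (‖Ξ - ξ‖ ^ 2 + ‖ξ‖ + a) ^ (2 * p - 2)
      ≤ (∫⁻ ξ, ENNReal.ofReal ‖‖ξ‖⁻¹ * (‖Ξ - ξ‖ ^ 2 + ‖ξ‖ + a) ^ (2 * p - 2)‖).toReal :=
        (Real.le_norm_self _).trans (norm_integral_le_lintegral_norm _)
    _ ≤ (ENNReal.ofReal (a ^ (2 * p - 1 + ε)) * ENNReal.ofReal K).toReal := by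
        refine ENNReal.toReal_mono (by finiteness) ?_
        grw [lintegral_mono h_pointwise, lintegral_const_mul' _ _ ENNReal.ofReal_ne_top, hK Ξ]
    _ = K * a ^ (2 * p - 1 + ε) := by
        rw [ENNReal.toReal_mul, ENNReal.toReal_ofReal (by positivity),
          ENNReal.toReal_ofReal hK0.le, mul_comm]

/-- For `0 ≤ p < 1/2` and `0 < ε ≤ 1 - 2p` there is `C > 0` such that for all `Ξ ∈ ℝ³` and
`a ≥ 1`: `∫ |ξ|⁻¹ (|Ξ-ξ|² + |ξ| + a)^(2p-2) dξ ≤ C a^(2p-1+ε)`. -/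
theorem stmt_8 (p ε : ℝ) (hp0 : 0 ≤ p) (hp : p < 1 / 2) (hε : 0 < ε) (hε' : ε ≤ 1 - 2 * p) :
    ∃ C > 0, ∀ (Ξ : EuclideanSpace ℝ (Fin 3)) (a : ℝ), 1 ≤ a →
      (∫ ξ : EuclideanSpace ℝ (Fin 3),
          ‖ξ‖⁻¹ * (‖Ξ - ξ‖ ^ 2 + ‖ξ‖ + a) ^ (2 * p - 2)) ≤
        C * a ^ (2 * p - 1 + ε) :=
  stmt_8_general p ε hp0 hε hε'
end

section
/- For every ε with 0 < ε < 1 there exists a constant C > 0 such that for all Ξ ∈ ℝ³ and all real a ≥ 1: ∫_{ℝ³} (a·|ξ|^{-1} + 1) · (|Ξ−ξ|² + |ξ| + a)^{-2} dξ ≤ C · a^{ε}. -/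
/-!
Write `g(r) = (a/r + 1)(r² + r + a)⁻²` for the integrand at `Ξ = 0`. With `m = min(|ξ|, |Ξ - ξ|)`
the integrand is at most `g(m) ≤ g(|ξ|) + g(|Ξ - ξ|)`, so by translation invariance the integral
is at most `2 ∫ g(|ξ|) dξ = 8π ∫₀^∞ r² g(r) dr`. Splitting
`r² g(r) ≤ a r (r² + a)⁻² + (1 + r²)⁻¹` bounds the radial integral by `1/2 + π/2`, uniformly in
`a > 0`; so the integral is bounded independently of `Ξ` and `a`, and `1 ≤ a ^ ε` for `a ≥ 1`.
-/

open MeasureTheory Set Filter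

noncomputable def radialKernel (a r : ℝ) : ℝ := (a * r⁻¹ + 1) * ((r ^ 2 + r + a) ^ 2)⁻¹

section radialKernel

variable {a : ℝ}

lemma radialKernel_nonneg (ha : 0 ≤ a) {r : ℝ} (hr : 0 ≤ r) : 0 ≤ radialKernel a r := by
  unfold radialKernel; positivity

lemma le_radialKernel_min (ha : 0 ≤ a) {x y : ℝ} (hx : 0 < x) (hy : 0 < y) :
    (a * x⁻¹ + 1) * ((y ^ 2 + x + a) ^ 2)⁻¹ ≤ radialKernel a (min x y) := by
  have hm : 0 < min x y := lt_min hx hy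
  unfold radialKernel
  gcongr
  · exact min_le_left x y
  · exact min_le_right x y
  · exact min_le_left x y

lemma radialKernel_min_le_add (ha : 0 ≤ a) {x y : ℝ} (hx : 0 ≤ x) (hy : 0 ≤ y) :
    radialKernel a (min x y) ≤ radialKernel a x + radialKernel a y := by
  rcases min_choice x y with h | h <;> rw [h]
  · linarith [radialKernel_nonneg ha hy]
  · linarith [radialKernel_nonneg ha hx]

lemma sq_mul_radialKernel_le (ha : 0 ≤ a) {r : ℝ} (hr : 0 < r) :
    r ^ 2 * radialKernel a r ≤ a * r * ((r ^ 2 + a) ^ 2)⁻¹ + (1 + r ^ 2)⁻¹ := by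
  have hsplit : r ^ 2 * radialKernel a r
      = a * r * ((r ^ 2 + r + a) ^ 2)⁻¹ + r ^ 2 * ((r ^ 2 + r + a) ^ 2)⁻¹ := by
    unfold radialKernel; field_simp
  have hsq : r ^ 2 * ((r ^ 2 + r + a) ^ 2)⁻¹ ≤ (1 + r ^ 2)⁻¹ := by
    rw [← div_eq_mul_inv, inv_eq_one_div, div_le_div_iff₀ (by positivity) (by positivity)]
    nlinarith [sq_nonneg r, mul_pos hr hr]
  rw [hsplit]
  gcongr
  linarith

lemma hasDerivAt_neg_half_mul_inv_sq_add (ha : 0 < a) (x : ℝ) :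
    HasDerivAt (fun r : ℝ => -(a / 2) * (r ^ 2 + a)⁻¹) (a * x * ((x ^ 2 + a) ^ 2)⁻¹) x := by
  have hpos : 0 < x ^ 2 + a := by positivity
  have h := (((hasDerivAt_pow 2 x).add_const a).inv hpos.ne').const_mul (-(a / 2))
  refine h.congr_deriv ?_
  simp only [Nat.cast_ofNat, pow_one, Nat.add_one_sub_one]
  ring

lemma tendsto_neg_half_mul_inv_sq_add (a : ℝ) :
    Tendsto (fun r : ℝ => -(a / 2) * (r ^ 2 + a)⁻¹) atTop (nhds 0) := by
  simpa using (tendsto_atTop_add_const_right _ a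
    (tendsto_pow_atTop two_ne_zero)).inv_tendsto_atTop.const_mul (-(a / 2))

lemma integrableOn_Ioi_mul_mul_inv_sq_add_sq_sq (ha : 0 < a) :
    IntegrableOn (fun x : ℝ => a * x * ((x ^ 2 + a) ^ 2)⁻¹) (Ioi 0) :=
  integrableOn_Ioi_deriv_of_nonneg' (fun x _ => hasDerivAt_neg_half_mul_inv_sq_add ha x)
    (fun x (hx : 0 < x) => by positivity)
    (tendsto_neg_half_mul_inv_sq_add a)

lemma integral_Ioi_mul_mul_inv_sq_add_sq_sq (ha : 0 < a) :
    ∫ x in Ioi (0 : ℝ), a * x * ((x ^ 2 + a) ^ 2)⁻¹ = 1 / 2 := by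
  rw [integral_Ioi_of_hasDerivAt_of_nonneg' (fun x _ => hasDerivAt_neg_half_mul_inv_sq_add ha x)
    (fun x (hx : 0 < x) => by positivity)
    (tendsto_neg_half_mul_inv_sq_add a)]
  field_simp
  ring

lemma integrableOn_Ioi_sq_mul_radialKernel_majorant (ha : 0 < a) :
    IntegrableOn (fun r : ℝ => a * r * ((r ^ 2 + a) ^ 2)⁻¹ + (1 + r ^ 2)⁻¹) (Ioi 0) :=
  (integrableOn_Ioi_mul_mul_inv_sq_add_sq_sq ha).add integrable_inv_one_add_sq.integrableOn

lemma integrableOn_Ioi_sq_mul_radialKernel (ha : 0 < a) :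
    IntegrableOn (fun r : ℝ => r ^ 2 * radialKernel a r) (Ioi 0) := by
  refine (integrableOn_Ioi_sq_mul_radialKernel_majorant ha).mono'
    (by unfold radialKernel; fun_prop) ?_
  refine (ae_restrict_iff' measurableSet_Ioi).2 (.of_forall fun r (hr : 0 < r) => ?_)
  rw [Real.norm_of_nonneg (mul_nonneg (sq_nonneg r) (radialKernel_nonneg ha.le hr.le))]
  exact sq_mul_radialKernel_le ha.le hr

lemma integral_Ioi_sq_mul_radialKernel_le (ha : 0 < a) :
    ∫ r in Ioi (0 : ℝ), r ^ 2 * radialKernel a r ≤ 1 / 2 + Real.pi / 2 :=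
  calc ∫ r in Ioi (0 : ℝ), r ^ 2 * radialKernel a r
      ≤ ∫ r in Ioi (0 : ℝ), (a * r * ((r ^ 2 + a) ^ 2)⁻¹ + (1 + r ^ 2)⁻¹) :=
        setIntegral_mono_on (integrableOn_Ioi_sq_mul_radialKernel ha)
          (integrableOn_Ioi_sq_mul_radialKernel_majorant ha) measurableSet_Ioi
          fun _ hr => sq_mul_radialKernel_le ha.le hr
    _ = 1 / 2 + Real.pi / 2 := by
      rw [integral_add (integrableOn_Ioi_mul_mul_inv_sq_add_sq_sq ha)
        integrable_inv_one_add_sq.integrableOn, integral_Ioi_mul_mul_inv_sq_add_sq_sq ha,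
        integral_Ioi_inv_one_add_sq, Real.arctan_zero, sub_zero]

end radialKernel

section Haar

variable {E : Type*} [NormedAddCommGroup E] [NormedSpace ℝ E] [MeasurableSpace E] [BorelSpace E]
  [FiniteDimensional ℝ E] [Nontrivial E] (μ : Measure E) [μ.IsAddHaarMeasure] {a : ℝ}

lemma integrable_radialKernel_norm (hE : Module.finrank ℝ E = 3) (ha : 0 < a) :
    Integrable (fun x : E => radialKernel a ‖x‖) μ := by
  rw [integrable_fun_norm_addHaar, hE]
  simpa using integrableOn_Ioi_sq_mul_radialKernel ha

lemma integral_radialKernel_norm_le (hE : Module.finrank ℝ E = 3) (ha : 0 < a) :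
    ∫ x : E, radialKernel a ‖x‖ ∂μ ≤ 3 * μ.real (Metric.ball 0 1) * (1 / 2 + Real.pi / 2) := by
  rw [integral_fun_norm_addHaar, hE, nsmul_eq_mul, smul_eq_mul, Nat.cast_ofNat, mul_assoc]
  gcongr
  simpa using integral_Ioi_sq_mul_radialKernel_le ha

lemma integral_le_two_mul_integral_radialKernel_norm (ha : 0 < a) (Ξ : E)
    (hint : Integrable (fun x : E => radialKernel a ‖x‖) μ) :
    ∫ ξ, (a * ‖ξ‖⁻¹ + 1) * ((‖Ξ - ξ‖ ^ 2 + ‖ξ‖ + a) ^ 2)⁻¹ ∂μ ≤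
      2 * ∫ x, radialKernel a ‖x‖ ∂μ := by
  have hint' : Integrable (fun ξ : E => radialKernel a ‖Ξ - ξ‖) μ :=
    (integrable_comp_sub_left (fun x : E => radialKernel a ‖x‖) Ξ).2 hint
  have hle : ∀ᵐ ξ ∂μ, (a * ‖ξ‖⁻¹ + 1) * ((‖Ξ - ξ‖ ^ 2 + ‖ξ‖ + a) ^ 2)⁻¹ ≤
      radialKernel a ‖ξ‖ + radialKernel a ‖Ξ - ξ‖ := by
    filter_upwards [measure_eq_zero_iff_ae_notMem.1 (measure_singleton (μ := μ) 0),
      measure_eq_zero_iff_ae_notMem.1 (measure_singleton (μ := μ) Ξ)] with ξ hξ₀ hξΞ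
    have hx : 0 < ‖ξ‖ := norm_pos_iff.2 hξ₀
    have hy : 0 < ‖Ξ - ξ‖ := norm_pos_iff.2 (sub_ne_zero.2 (Ne.symm hξΞ))
    exact (le_radialKernel_min ha.le hx hy).trans (radialKernel_min_le_add ha.le hx.le hy.le)
  calc ∫ ξ, (a * ‖ξ‖⁻¹ + 1) * ((‖Ξ - ξ‖ ^ 2 + ‖ξ‖ + a) ^ 2)⁻¹ ∂μ
      ≤ ∫ ξ, (radialKernel a ‖ξ‖ + radialKernel a ‖Ξ - ξ‖) ∂μ :=
        integral_mono_of_nonneg (.of_forall fun ξ => by positivity) (hint.add hint') hle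
    _ = 2 * ∫ x, radialKernel a ‖x‖ ∂μ := by
      rw [integral_add hint hint', integral_sub_left_eq_self (fun x : E => radialKernel a ‖x‖) μ Ξ,
        two_mul]

end Haar

theorem stmt_9_general (ε : ℝ) (hε : 0 < ε) :
    ∃ C > 0, ∀ (Ξ : EuclideanSpace ℝ (Fin 3)) (a : ℝ), 1 ≤ a →
      (∫ ξ : EuclideanSpace ℝ (Fin 3),
          (a * ‖ξ‖⁻¹ + 1) * ((‖Ξ - ξ‖ ^ 2 + ‖ξ‖ + a) ^ 2)⁻¹) ≤
        C * a ^ ε := by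
  have hdim : Module.finrank ℝ (EuclideanSpace ℝ (Fin 3)) = 3 := finrank_euclideanSpace_fin
  set V := volume.real (Metric.ball (0 : EuclideanSpace ℝ (Fin 3)) 1)
  have hV : 0 < V := ENNReal.toReal_pos (Metric.measure_ball_pos _ 0 one_pos).ne' measure_ball_lt_top.ne
  refine ⟨2 * (3 * V * (1 / 2 + Real.pi / 2)), by positivity, fun Ξ a ha => ?_⟩
  have ha₀ : 0 < a := one_pos.trans_le ha
  calc _ ≤ 2 * ∫ x : EuclideanSpace ℝ (Fin 3), radialKernel a ‖x‖ :=
        integral_le_two_mul_integral_radialKernel_norm volume ha₀ Ξ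
          (integrable_radialKernel_norm volume hdim ha₀)
    _ ≤ 2 * (3 * V * (1 / 2 + Real.pi / 2)) := by
        gcongr; exact integral_radialKernel_norm_le volume hdim ha₀
    _ ≤ 2 * (3 * V * (1 / 2 + Real.pi / 2)) * a ^ ε :=
        le_mul_of_one_le_right (by positivity) (Real.one_le_rpow ha hε.le)

/-- For `0 < ε < 1` there is `C > 0` such that for all `Ξ ∈ ℝ³` and `a ≥ 1`:
`∫ (a |ξ|⁻¹ + 1) (|Ξ-ξ|² + |ξ| + a)⁻² dξ ≤ C a^ε`. -/
theorem stmt_9 (ε : ℝ) (hε : 0 < ε) (hε1 : ε < 1) :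
    ∃ C > 0, ∀ (Ξ : EuclideanSpace ℝ (Fin 3)) (a : ℝ), 1 ≤ a →
      (∫ ξ : EuclideanSpace ℝ (Fin 3),
          (a * ‖ξ‖⁻¹ + 1) * ((‖Ξ - ξ‖ ^ 2 + ‖ξ‖ + a) ^ 2)⁻¹) ≤
        C * a ^ ε :=
  stmt_9_general ε hε
end

section
/- For every ε with 0 < ε < 1 there exists a constant C > 0 such that for all Ξ ∈ ℝ³: ∫_{ℝ³} (|Ξ|² + 2|ξ||Ξ|) / ((|Ξ−ξ|² + 1) · |ξ|^{3−ε}) dξ ≤ C · (1 + |Ξ|)^{2ε}. -/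
open MeasureTheory Metric Set Real
open scoped ENNReal

lemma stmt10_J_fin {p : ℝ} (hp : 3 < p) :
    (∫⁻ x : EuclideanSpace ℝ (Fin 3), ENNReal.ofReal ((1 + ‖x‖) ^ (-p))) < ⊤ := by
  apply finite_integral_one_add_norm
  rw [show Module.finrank ℝ (EuclideanSpace ℝ (Fin 3)) = 3 by simp [finrank_euclideanSpace]]
  exact_mod_cast hp

lemma stmt10_B_fin {ε : ℝ} (hε : 0 < ε) (hε3 : ε < 3) :
    (∫⁻ x : EuclideanSpace ℝ (Fin 3) in ball 0 1, ENNReal.ofReal (‖x‖ ^ (ε - 3))) < ⊤ := by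
  set E := EuclideanSpace ℝ (Fin 3)
  set A : ℕ → Set E := fun k => ball (0 : E) ((1/2 : ℝ) ^ k) \ ball 0 ((1/2 : ℝ) ^ (k + 1)) with hA
  have cover : ball (0 : E) 1 ⊆ {0} ∪ ⋃ k, A k := by
    intro x hx
    rcases eq_or_ne x 0 with rfl | hx0
    · exact Or.inl rfl
    right
    have hx1 : ‖x‖ < 1 := mem_ball_zero_iff.mp hx
    have hxpos : 0 < ‖x‖ := norm_pos_iff.mpr hx0
    have hex : ∃ n : ℕ, (1/2 : ℝ) ^ (n + 1) ≤ ‖x‖ := by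
      obtain ⟨n, hn⟩ := exists_pow_lt_of_lt_one hxpos (by norm_num : (1/2 : ℝ) < 1)
      exact ⟨n, le_of_lt (lt_of_le_of_lt (pow_le_pow_of_le_one (by norm_num) (by norm_num)
        (Nat.le_succ n)) hn)⟩
    have h1 : (1/2 : ℝ) ^ (Nat.find hex + 1) ≤ ‖x‖ := Nat.find_spec hex
    have h2 : ‖x‖ < (1/2 : ℝ) ^ (Nat.find hex) := by
      rcases Nat.eq_zero_or_pos (Nat.find hex) with h0 | hpos
      · rw [h0]; simpa using hx1
      · have hm := Nat.find_min hex (Nat.sub_lt hpos one_pos)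
        push_neg at hm
        have heq : Nat.find hex - 1 + 1 = Nat.find hex := by omega
        rwa [heq] at hm
    exact mem_iUnion.mpr ⟨Nat.find hex, mem_ball_zero_iff.mpr h2, fun h =>
      absurd (mem_ball_zero_iff.mp h) (not_lt.mpr h1)⟩
  have V_fin : volume (ball (0 : E) 1) < ⊤ := measure_ball_lt_top
  set V := volume (ball (0 : E) 1) with hV
  calc ∫⁻ x : E in ball 0 1, ENNReal.ofReal (‖x‖ ^ (ε - 3))
      ≤ ∫⁻ x : E in ({0} ∪ ⋃ k, A k), ENNReal.ofReal (‖x‖ ^ (ε - 3)) :=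
        lintegral_mono_set cover
    _ ≤ (∫⁻ x : E in {0}, ENNReal.ofReal (‖x‖ ^ (ε - 3)))
          + ∫⁻ x : E in ⋃ k, A k, ENNReal.ofReal (‖x‖ ^ (ε - 3)) := lintegral_union_le _ _ _
    _ ≤ 0 + ∑' k, ∫⁻ x : E in A k, ENNReal.ofReal (‖x‖ ^ (ε - 3)) := by
        gcongr
        · rw [setLIntegral_measure_zero]
          exact measure_singleton 0
        · exact lintegral_iUnion_le _ _
    _ = ∑' k, ∫⁻ x : E in A k, ENNReal.ofReal (‖x‖ ^ (ε - 3)) := by rw [zero_add]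
    _ ≤ ∑' k, (ENNReal.ofReal ((1/2 : ℝ) ^ (ε - 3)) * ENNReal.ofReal ((1/2 : ℝ) ^ ε) ^ k) * V := by
        apply ENNReal.tsum_le_tsum
        intro k
        have hmeas : MeasurableSet (A k) := measurableSet_ball.diff measurableSet_ball
        have step1 : ∫⁻ x : E in A k, ENNReal.ofReal (‖x‖ ^ (ε - 3))
            ≤ ∫⁻ _ : E in A k, ENNReal.ofReal (((1/2 : ℝ) ^ (k+1)) ^ (ε - 3)) := by
          apply setLIntegral_mono' hmeas
          intro x hx
          apply ENNReal.ofReal_le_ofReal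
          apply Real.rpow_le_rpow_of_nonpos (by positivity)
            (le_of_not_gt fun h => hx.2 (mem_ball_zero_iff.mpr h)) (by linarith)
        refine step1.trans ?_
        rw [setLIntegral_const]
        have hvol : volume (A k) ≤ ENNReal.ofReal (((1/2 : ℝ) ^ k) ^ (3 : ℕ)) * V := by
          calc volume (A k) ≤ volume (ball (0 : E) ((1/2 : ℝ) ^ k)) :=
                measure_mono diff_subset
            _ = ENNReal.ofReal (((1/2 : ℝ) ^ k) ^ Module.finrank ℝ E) * V := by
                rw [Measure.addHaar_ball _ _ (by positivity)]
            _ = ENNReal.ofReal (((1/2 : ℝ) ^ k) ^ (3 : ℕ)) * V := by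
                have h3 : Module.finrank ℝ E = 3 := by
                  show Module.finrank ℝ (EuclideanSpace ℝ (Fin 3)) = 3
                  simp [finrank_euclideanSpace]
                rw [h3]
        calc ENNReal.ofReal (((1/2 : ℝ) ^ (k+1)) ^ (ε - 3)) * volume (A k)
            ≤ ENNReal.ofReal (((1/2 : ℝ) ^ (k+1)) ^ (ε - 3)) *
              (ENNReal.ofReal (((1/2 : ℝ) ^ k) ^ (3 : ℕ)) * V) := by gcongr
          _ = (ENNReal.ofReal (((1/2 : ℝ) ^ (k+1)) ^ (ε - 3) * ((1/2 : ℝ) ^ k) ^ (3 : ℕ))) * V := by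
              rw [← mul_assoc, ← ENNReal.ofReal_mul (by positivity)]
          _ ≤ (ENNReal.ofReal ((1/2 : ℝ) ^ (ε - 3)) * ENNReal.ofReal ((1/2 : ℝ) ^ ε) ^ k) * V := by
              gcongr ?_ * V
              rw [← ENNReal.ofReal_pow (by positivity), ← ENNReal.ofReal_mul (by positivity)]
              apply ENNReal.ofReal_le_ofReal
              apply le_of_eq
              have h2 : (0:ℝ) < 1/2 := by norm_num
              have key : ∀ (a : ℝ) (n : ℕ), ((1/2:ℝ)^n) ^ a = (1/2:ℝ) ^ ((n:ℝ) * a) := by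
                intro a n
                rw [← Real.rpow_natCast (1/2:ℝ) n, ← Real.rpow_mul h2.le]
              rw [key (ε-3) (k+1), ← pow_mul, ← Real.rpow_natCast (1/2:ℝ) (k*3),
                ← Real.rpow_add h2, ← Real.rpow_natCast ((1/2:ℝ) ^ ε) k,
                ← Real.rpow_mul h2.le, ← Real.rpow_add h2]
              congr 1
              push_cast
              ring
          _ = _ := rfl
    _ = (ENNReal.ofReal ((1/2 : ℝ) ^ (ε - 3)) * V) * ∑' k, ENNReal.ofReal ((1/2 : ℝ) ^ ε) ^ k := by
        rw [← ENNReal.tsum_mul_left]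
        congr 1; ext k; ring
    _ < ⊤ := by
        apply ENNReal.mul_lt_top
        · exact ENNReal.mul_lt_top ENNReal.ofReal_lt_top V_fin
        · rw [ENNReal.tsum_geometric]
          rw [ENNReal.inv_lt_top, tsub_pos_iff_lt]
          apply ENNReal.ofReal_lt_one.mpr
          apply Real.rpow_lt_one (by norm_num) (by norm_num) hε

lemma stmt10_inv_shift {b p : ℝ} (hb : 1 ≤ b) (hp : 0 ≤ p) :
    b ^ (-p) ≤ 2 ^ p * (1 + b) ^ (-p) := by
  have hb0 : (0:ℝ) < b := by linarith
  have h1b : (0:ℝ) < 1 + b := by linarith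
  have h1 : (1 + b) ^ p ≤ 2 ^ p * b ^ p := by
    rw [← Real.mul_rpow (by norm_num) hb0.le]
    exact Real.rpow_le_rpow h1b.le (by linarith) hp
  have hbp : (0:ℝ) < b ^ p := Real.rpow_pos_of_pos hb0 _
  have h1bp : (0:ℝ) < (1 + b) ^ p := Real.rpow_pos_of_pos h1b _
  rw [Real.rpow_neg hb0.le, Real.rpow_neg h1b.le, ← one_div, ← one_div,
    mul_one_div, div_le_div_iff₀ hbp h1bp, one_mul]
  linarith

lemma stmt10_two_rpow_le {p : ℝ} {n : ℕ} (h : p ≤ n) : (2:ℝ) ^ p ≤ 2 ^ n :=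
  (Real.rpow_le_rpow_of_exponent_le one_le_two h).trans_eq (Real.rpow_natCast 2 n)

lemma stmt10_regA {ε M a b c : ℝ} (hε : 0 < ε) (hε1 : ε < 1) (hM : 1 ≤ M) (ha0 : 0 ≤ a)
    (ha : a ≤ M) (hb0 : 0 ≤ b) (hbM : b ≤ M) (hc : M ^ 2 / 4 ≤ c ^ 2 + 1) :
    (a ^ 2 + 2 * b * a) / ((c ^ 2 + 1) * b ^ (3 - ε)) ≤ 12 * b ^ (ε - 3) := by
  rcases eq_or_lt_of_le hb0 with rfl | hbpos
  · rw [Real.zero_rpow (by linarith : (3:ℝ) - ε ≠ 0), Real.zero_rpow (by linarith : ε - 3 ≠ 0),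
      mul_zero]
    simp
  have hM0 : (0:ℝ) < M := by linarith
  have hnum : a ^ 2 + 2 * b * a ≤ 3 * M ^ 2 := by nlinarith
  have hden : M ^ 2 / 4 * b ^ (3 - ε) ≤ (c ^ 2 + 1) * b ^ (3 - ε) := by
    apply mul_le_mul_of_nonneg_right hc (Real.rpow_nonneg hb0 _)
  calc (a ^ 2 + 2 * b * a) / ((c ^ 2 + 1) * b ^ (3 - ε))
      ≤ 3 * M ^ 2 / (M ^ 2 / 4 * b ^ (3 - ε)) := by
        apply div_le_div₀ (by positivity) hnum (by positivity) hden
    _ = 12 * (b ^ (3 - ε))⁻¹ := by field_simp; ring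
    _ = 12 * b ^ (ε - 3) := by
        rw [show ε - 3 = -(3 - ε) by ring, Real.rpow_neg hb0]


lemma stmt10_regA2 {ε M b : ℝ} (hε : 0 < ε) (hε1 : ε < 1) (hM : 1 ≤ M) (hb1 : 1 ≤ b) (hbM : b ≤ M) :
    12 * b ^ (ε - 3) ≤ 384 * M ^ (2 * ε) * (1 + b) ^ (-(3 + ε)) := by
  have hM0 : (0:ℝ) < M := by linarith
  have h1b : (0:ℝ) < 1 + b := by linarith
  have step1 : b ^ (ε - 3) ≤ 8 * (1 + b) ^ (-(3 - ε)) := by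
    have := stmt10_inv_shift hb1 (by linarith : (0:ℝ) ≤ 3 - ε)
    rw [show -(3 - ε) = ε - 3 by ring] at this
    calc b ^ (ε - 3) ≤ 2 ^ (3 - ε) * (1 + b) ^ (ε - 3) := this
      _ ≤ 8 * (1 + b) ^ (-(3 - ε)) := by
          rw [show -(3 - ε) = ε - 3 by ring]
          apply mul_le_mul_of_nonneg_right _ (Real.rpow_nonneg h1b.le _)
          calc (2:ℝ) ^ (3 - ε) ≤ 2 ^ (3:ℕ) := stmt10_two_rpow_le (by norm_num; linarith)
            _ = 8 := by norm_num
  have step2 : (1 + b) ^ (-(3 - ε)) = (1 + b) ^ (-(3 + ε)) * (1 + b) ^ (2 * ε) := by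
    rw [← Real.rpow_add h1b]; ring_nf
  have step3 : (1 + b) ^ (2 * ε) ≤ 4 * M ^ (2 * ε) := by
    calc (1 + b) ^ (2 * ε) ≤ (2 * M) ^ (2 * ε) :=
          Real.rpow_le_rpow h1b.le (by linarith) (by linarith)
      _ = 2 ^ (2 * ε) * M ^ (2 * ε) := Real.mul_rpow (by norm_num) hM0.le
      _ ≤ 4 * M ^ (2 * ε) := by
          apply mul_le_mul_of_nonneg_right _ (Real.rpow_nonneg hM0.le _)
          calc (2:ℝ) ^ (2 * ε) ≤ 2 ^ (2:ℕ) := stmt10_two_rpow_le (by norm_num; linarith)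
            _ = 4 := by norm_num
  calc 12 * b ^ (ε - 3) ≤ 12 * (8 * ((1 + b) ^ (-(3 + ε)) * (1 + b) ^ (2 * ε))) := by
        rw [← step2]; linarith
    _ ≤ 12 * (8 * ((1 + b) ^ (-(3 + ε)) * (4 * M ^ (2 * ε)))) := by
        have h0 : (0:ℝ) ≤ (1 + b) ^ (-(3 + ε)) := Real.rpow_nonneg h1b.le _
        have := mul_le_mul_of_nonneg_left step3 h0
        nlinarith [this]
    _ = 384 * M ^ (2 * ε) * (1 + b) ^ (-(3 + ε)) := by ring

lemma stmt10_regP {ε M a b c : ℝ} (hε : 0 < ε) (hε1 : ε < 1) (hM : 1 ≤ M) (ha0 : 0 ≤ a) (ha : a ≤ M)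
    (hb : M / 2 ≤ b) (hc0 : 0 ≤ c) (hcM : c ≤ M / 2) (hbac : b ≤ a + c) :
    (a ^ 2 + 2 * b * a) / ((c ^ 2 + 1) * b ^ (3 - ε)) ≤
      256 * M ^ (2 * ε) * (1 + c) ^ (-(3 + ε)) := by
  have hM0 : (0:ℝ) < M := by linarith
  have hb0 : (0:ℝ) < b := by linarith
  have h1c : (0:ℝ) < 1 + c := by linarith
  have hnum : a ^ 2 + 2 * b * a ≤ 4 * M ^ 2 := by nlinarith
  have hMu : M ^ (ε - 1) * M ^ (3 - ε) = M ^ 2 := by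
    rw [← Real.rpow_add hM0, show ε - 1 + (3 - ε) = ((2:ℕ):ℝ) by norm_num, Real.rpow_natCast]
  have h8 : M ^ (3 - ε) / 8 ≤ (M / 2) ^ (3 - ε) := by
    rw [show M / 2 = M * (1 / 2) by ring, Real.mul_rpow hM0.le (by norm_num)]
    have : (1/8 : ℝ) ≤ (1/2 : ℝ) ^ (3 - ε) := by
      calc (1/8 : ℝ) = (1/2 : ℝ) ^ ((3:ℕ):ℝ) := by
            rw [Real.rpow_natCast]; norm_num
        _ ≤ (1/2 : ℝ) ^ (3 - ε) :=
            Real.rpow_le_rpow_of_exponent_ge (by norm_num) (by norm_num) (by push_cast; linarith)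
    calc M ^ (3 - ε) / 8 = M ^ (3 - ε) * (1/8) := by ring
      _ ≤ M ^ (3 - ε) * (1/2) ^ (3 - ε) := by
          apply mul_le_mul_of_nonneg_left this (Real.rpow_nonneg hM0.le _)
  have hden : (c ^ 2 + 1) * (M ^ (3 - ε) / 8) ≤ (c ^ 2 + 1) * b ^ (3 - ε) := by
    apply mul_le_mul_of_nonneg_left _ (by positivity)
    exact h8.trans (Real.rpow_le_rpow (by positivity) hb (by linarith))
  have step1 : (a ^ 2 + 2 * b * a) / ((c ^ 2 + 1) * b ^ (3 - ε)) ≤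
      4 * M ^ 2 / ((c ^ 2 + 1) * (M ^ (3 - ε) / 8)) :=
    div_le_div₀ (by positivity) hnum (by positivity) hden
  have heq : 4 * M ^ 2 / ((c ^ 2 + 1) * (M ^ (3 - ε) / 8)) =
      32 * M ^ (ε - 1) * (1 / (c ^ 2 + 1)) := by
    have hu : (0:ℝ) < M ^ (3 - ε) := Real.rpow_pos_of_pos hM0 _
    have hv : (0:ℝ) < c ^ 2 + 1 := by positivity
    rw [← hMu]
    field_simp
    ring
  have h1 : 1 / (c ^ 2 + 1) ≤ 2 * (1 + c) ^ (-(2:ℝ)) := by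
    rw [show -(2:ℝ) = -((2:ℕ):ℝ) by norm_num, Real.rpow_neg h1c.le, Real.rpow_natCast,
      ← one_div, mul_one_div, div_le_div_iff₀ (by positivity) (by positivity), one_mul]
    nlinarith [sq_nonneg (c - 1)]
  have h2 : (1 + c) ^ (-(2:ℝ)) = (1 + c) ^ (-(3 + ε)) * (1 + c) ^ (1 + ε) := by
    rw [← Real.rpow_add h1c]; ring_nf
  have h3 : (1 + c) ^ (1 + ε) ≤ 4 * M ^ (1 + ε) := by
    calc (1 + c) ^ (1 + ε) ≤ (2 * M) ^ (1 + ε) :=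
          Real.rpow_le_rpow h1c.le (by linarith) (by linarith)
      _ = 2 ^ (1 + ε) * M ^ (1 + ε) := Real.mul_rpow (by norm_num) hM0.le
      _ ≤ 4 * M ^ (1 + ε) := by
          apply mul_le_mul_of_nonneg_right _ (Real.rpow_nonneg hM0.le _)
          calc (2:ℝ) ^ (1 + ε) ≤ 2 ^ (2:ℕ) := stmt10_two_rpow_le (by norm_num; linarith)
            _ = 4 := by norm_num
  have hM2 : M ^ (ε - 1) * M ^ (1 + ε) = M ^ (2 * ε) := by
    rw [← Real.rpow_add hM0]; ring_nf
  have hMe1 : (0:ℝ) ≤ M ^ (ε - 1) := Real.rpow_nonneg hM0.le _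
  have h3c : (0:ℝ) ≤ (1 + c) ^ (-(3 + ε)) := Real.rpow_nonneg h1c.le _
  calc (a ^ 2 + 2 * b * a) / ((c ^ 2 + 1) * b ^ (3 - ε))
      ≤ 32 * M ^ (ε - 1) * (1 / (c ^ 2 + 1)) := step1.trans_eq heq
    _ ≤ 32 * M ^ (ε - 1) * (2 * ((1 + c) ^ (-(3 + ε)) * (1 + c) ^ (1 + ε))) := by
        rw [← h2]
        apply mul_le_mul_of_nonneg_left h1 (by positivity)
    _ ≤ 32 * M ^ (ε - 1) * (2 * ((1 + c) ^ (-(3 + ε)) * (4 * M ^ (1 + ε)))) := by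
        have := mul_le_mul_of_nonneg_left h3 h3c
        have h32 : (0:ℝ) ≤ 32 * M ^ (ε - 1) := by positivity
        nlinarith [this]
    _ = 256 * (M ^ (ε - 1) * M ^ (1 + ε)) * (1 + c) ^ (-(3 + ε)) := by ring
    _ = 256 * M ^ (2 * ε) * (1 + c) ^ (-(3 + ε)) := by rw [hM2]


lemma stmt10_regQ {ε M a b c : ℝ} (hε : 0 < ε) (hε1 : ε < 1) (hM : 1 ≤ M) (ha0 : 0 ≤ a) (ha : a ≤ M)
    (hb1 : 1 ≤ b) (hbM : M / 2 ≤ b) (hcM : M / 2 ≤ c) (hcb : b - a ≤ c) :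
    (a ^ 2 + 2 * b * a) / ((c ^ 2 + 1) * b ^ (3 - ε)) ≤
      2048 * M ^ (2 * ε) * ((1 + b) ^ (-(3 + ε)) + (1 + b) ^ (-(4 - ε))) := by
  have hM0 : (0:ℝ) < M := by linarith
  have hb0 : (0:ℝ) < b := by linarith
  have hMb : M ≤ 2 * b := by linarith
  have hc0 : (0:ℝ) ≤ c := by linarith
  have hc4 : b / 4 ≤ c := by
    rcases le_or_gt b (2 * M) with h | h
    · linarith
    · linarith
  have hnum : a ^ 2 + 2 * b * a ≤ 4 * M * b := by nlinarith
  have hden : b ^ 2 / 16 * b ^ (3 - ε) ≤ (c ^ 2 + 1) * b ^ (3 - ε) := by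
    apply mul_le_mul_of_nonneg_right _ (Real.rpow_nonneg hb0.le _)
    nlinarith
  have step1 : (a ^ 2 + 2 * b * a) / ((c ^ 2 + 1) * b ^ (3 - ε)) ≤
      4 * M * b / (b ^ 2 / 16 * b ^ (3 - ε)) :=
    div_le_div₀ (by positivity) hnum (by positivity) hden
  have hkey : b ^ (-(4 - ε)) * (b ^ 2 * b ^ (3 - ε)) = b := by
    rw [← Real.rpow_natCast b 2, ← Real.rpow_add hb0, ← Real.rpow_add hb0]
    push_cast
    rw [show -(4 - ε) + (2 + (3 - ε)) = (1:ℝ) by ring, Real.rpow_one]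
  have heq : 4 * M * b / (b ^ 2 / 16 * b ^ (3 - ε)) = 64 * M * b ^ (-(4 - ε)) := by
    have hw : (0:ℝ) < b ^ (3 - ε) := Real.rpow_pos_of_pos hb0 _
    rw [eq_comm, eq_div_iff (by positivity)]
    linear_combination (4 * M) * hkey
  have hb1e : (0:ℝ) < 1 + b := by linarith
  have hM' : M ^ (1 - 2 * ε) ≤ 2 * b ^ (1 - 2 * ε) + 1 := by
    rcases le_or_gt 0 (1 - 2 * ε) with h | h
    · have h1 : M ^ (1 - 2 * ε) ≤ (2 * b) ^ (1 - 2 * ε) :=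
        Real.rpow_le_rpow hM0.le hMb h
      have h2 : ((2:ℝ) * b) ^ (1 - 2 * ε) = 2 ^ (1 - 2 * ε) * b ^ (1 - 2 * ε) :=
        Real.mul_rpow (by norm_num) hb0.le
      have h3 : (2:ℝ) ^ (1 - 2 * ε) ≤ 2 := by
        calc (2:ℝ) ^ (1 - 2 * ε) ≤ 2 ^ (1:ℕ) := stmt10_two_rpow_le (by norm_num; linarith)
          _ = 2 := by norm_num
      have h4 : (0:ℝ) ≤ b ^ (1 - 2 * ε) := Real.rpow_nonneg hb0.le _
      nlinarith [mul_le_mul_of_nonneg_right h3 h4]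
    · have h1 : M ^ (1 - 2 * ε) ≤ 1 := Real.rpow_le_one_of_one_le_of_nonpos hM h.le
      have h4 : (0:ℝ) ≤ b ^ (1 - 2 * ε) := Real.rpow_nonneg hb0.le _
      linarith
  have hMsplit : M = M ^ (2 * ε) * M ^ (1 - 2 * ε) := by
    rw [← Real.rpow_add hM0, show 2 * ε + (1 - 2 * ε) = (1:ℝ) by ring, Real.rpow_one]
  have hbsplit : b ^ (1 - 2 * ε) * b ^ (-(4 - ε)) = b ^ (-(3 + ε)) := by
    rw [← Real.rpow_add hb0]; ring_nf
  have hMnn : (0:ℝ) ≤ M ^ (2 * ε) := Real.rpow_nonneg hM0.le _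
  have hbe4 : (0:ℝ) ≤ b ^ (-(4 - ε)) := Real.rpow_nonneg hb0.le _
  have step2 : 64 * M * b ^ (-(4 - ε)) ≤
      64 * M ^ (2 * ε) * (2 * b ^ (-(3 + ε)) + b ^ (-(4 - ε))) := by
    calc 64 * M * b ^ (-(4 - ε))
        = 64 * (M ^ (2 * ε) * M ^ (1 - 2 * ε)) * b ^ (-(4 - ε)) := by rw [← hMsplit]
      _ ≤ 64 * (M ^ (2 * ε) * (2 * b ^ (1 - 2 * ε) + 1)) * b ^ (-(4 - ε)) := by
          gcongr
      _ = 64 * M ^ (2 * ε) * (2 * (b ^ (1 - 2 * ε) * b ^ (-(4 - ε))) + b ^ (-(4 - ε))) := by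
          ring
      _ = 64 * M ^ (2 * ε) * (2 * b ^ (-(3 + ε)) + b ^ (-(4 - ε))) := by rw [hbsplit]
  have hsh1 : b ^ (-(3 + ε)) ≤ 16 * (1 + b) ^ (-(3 + ε)) := by
    have h1 := stmt10_inv_shift hb1 (by linarith : (0:ℝ) ≤ 3 + ε)
    have h2 : (2:ℝ) ^ (3 + ε) ≤ 16 := by
      calc (2:ℝ) ^ (3 + ε) ≤ 2 ^ (4:ℕ) := stmt10_two_rpow_le (by norm_num; linarith)
        _ = 16 := by norm_num
    have h3 : (0:ℝ) ≤ (1 + b) ^ (-(3 + ε)) := Real.rpow_nonneg hb1e.le _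
    exact h1.trans (mul_le_mul_of_nonneg_right h2 h3)
  have hsh2 : b ^ (-(4 - ε)) ≤ 16 * (1 + b) ^ (-(4 - ε)) := by
    have h1 := stmt10_inv_shift hb1 (by linarith : (0:ℝ) ≤ 4 - ε)
    have h2 : (2:ℝ) ^ (4 - ε) ≤ 16 := by
      calc (2:ℝ) ^ (4 - ε) ≤ 2 ^ (4:ℕ) := stmt10_two_rpow_le (by norm_num; linarith)
        _ = 16 := by norm_num
    have h3 : (0:ℝ) ≤ (1 + b) ^ (-(4 - ε)) := Real.rpow_nonneg hb1e.le _
    exact h1.trans (mul_le_mul_of_nonneg_right h2 h3)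
  calc (a ^ 2 + 2 * b * a) / ((c ^ 2 + 1) * b ^ (3 - ε))
      ≤ 64 * M * b ^ (-(4 - ε)) := step1.trans_eq heq
    _ ≤ 64 * M ^ (2 * ε) * (2 * b ^ (-(3 + ε)) + b ^ (-(4 - ε))) := step2
    _ ≤ 64 * M ^ (2 * ε) * (2 * (16 * (1 + b) ^ (-(3 + ε))) + 16 * (1 + b) ^ (-(4 - ε))) := by
        have h1 := mul_le_mul_of_nonneg_left (add_le_add
          (mul_le_mul_of_nonneg_left hsh1 (by norm_num : (0:ℝ) ≤ 2)) hsh2)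
          (by positivity : (0:ℝ) ≤ 64 * M ^ (2 * ε))
        exact h1
    _ = 2048 * M ^ (2 * ε) * (1 + b) ^ (-(3 + ε))
          + 1024 * (M ^ (2 * ε) * (1 + b) ^ (-(4 - ε))) := by ring
    _ ≤ 2048 * M ^ (2 * ε) * (1 + b) ^ (-(3 + ε))
          + 2048 * (M ^ (2 * ε) * (1 + b) ^ (-(4 - ε))) := by
        have h3 : (0:ℝ) ≤ (1 + b) ^ (-(4 - ε)) := Real.rpow_nonneg hb1e.le _
        have hP : (0:ℝ) ≤ M ^ (2 * ε) * (1 + b) ^ (-(4 - ε)) := mul_nonneg hMnn h3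
        linarith
    _ = 2048 * M ^ (2 * ε) * ((1 + b) ^ (-(3 + ε)) + (1 + b) ^ (-(4 - ε))) := by ring


/-- For `0 < ε < 1` there is `C > 0` such that for all `Ξ ∈ ℝ³`:
`∫ (|Ξ|² + 2|ξ||Ξ|) / ((|Ξ-ξ|² + 1) |ξ|^(3-ε)) dξ ≤ C (1+|Ξ|)^(2ε)`. -/
theorem stmt_10 (ε : ℝ) (hε : 0 < ε) (hε1 : ε < 1) :
    ∃ C > 0, ∀ Ξ : EuclideanSpace ℝ (Fin 3),
      (∫ ξ : EuclideanSpace ℝ (Fin 3),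
          (‖Ξ‖ ^ 2 + 2 * ‖ξ‖ * ‖Ξ‖) / ((‖Ξ - ξ‖ ^ 2 + 1) * ‖ξ‖ ^ (3 - ε))) ≤
        C * (1 + ‖Ξ‖) ^ (2 * ε) := by
  set J1 : ℝ≥0∞ := ∫⁻ x : EuclideanSpace ℝ (Fin 3), ENNReal.ofReal ((1 + ‖x‖) ^ (-(3 + ε)))
    with hJ1def
  set J2 : ℝ≥0∞ := ∫⁻ x : EuclideanSpace ℝ (Fin 3), ENNReal.ofReal ((1 + ‖x‖) ^ (-(4 - ε)))
    with hJ2def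
  set B0 : ℝ≥0∞ := ∫⁻ x : EuclideanSpace ℝ (Fin 3) in ball 0 1, ENNReal.ofReal (‖x‖ ^ (ε - 3))
    with hB0def
  have hJ1fin : J1 ≠ ⊤ := (stmt10_J_fin (by linarith)).ne
  have hJ2fin : J2 ≠ ⊤ := (stmt10_J_fin (by linarith)).ne
  have hB0fin : B0 ≠ ⊤ := (stmt10_B_fin hε (by linarith)).ne
  set K : ℝ≥0∞ := ENNReal.ofReal 12 * B0 + ENNReal.ofReal 384 * J1 + ENNReal.ofReal 256 * J1
      + ENNReal.ofReal 2048 * (J1 + J2) with hKdef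
  have hKfin : K ≠ ⊤ := by finiteness
  refine ⟨K.toReal + 1, by positivity, fun Ξ => ?_⟩
  set M := max 1 ‖Ξ‖ with hMdef
  have hM1 : 1 ≤ M := le_max_left _ _
  have hMX : ‖Ξ‖ ≤ M := le_max_right _ _
  have hM0 : (0:ℝ) < M := by linarith
  have hM1X : M ≤ 1 + ‖Ξ‖ := max_le (by linarith [norm_nonneg Ξ]) (by linarith)
  set f : EuclideanSpace ℝ (Fin 3) → ℝ :=
    fun ξ => (‖Ξ‖ ^ 2 + 2 * ‖ξ‖ * ‖Ξ‖) / ((‖Ξ - ξ‖ ^ 2 + 1) * ‖ξ‖ ^ (3 - ε)) with hfdef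
  have hfm : Measurable f := by fun_prop
  have hfnn : 0 ≤ᵐ[volume] f := Filter.Eventually.of_forall (fun ξ => by positivity)
  rw [integral_eq_lintegral_of_nonneg_ae hfnn hfm.aestronglyMeasurable]
  have regA : ∀ {M a b c : ℝ}, 1 ≤ M → 0 ≤ a → a ≤ M → 0 ≤ b → b ≤ M →
      M ^ 2 / 4 ≤ c ^ 2 + 1 →
      (a ^ 2 + 2 * b * a) / ((c ^ 2 + 1) * b ^ (3 - ε)) ≤ 12 * b ^ (ε - 3) :=
    fun h1 h2 h3 h4 h5 h6 => stmt10_regA hε hε1 h1 h2 h3 h4 h5 h6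
  have regA2 : ∀ {M b : ℝ}, 1 ≤ M → 1 ≤ b → b ≤ M →
      12 * b ^ (ε - 3) ≤ 384 * M ^ (2 * ε) * (1 + b) ^ (-(3 + ε)) :=
    fun h1 h2 h3 => stmt10_regA2 hε hε1 h1 h2 h3
  have regP : ∀ {M a b c : ℝ}, 1 ≤ M → 0 ≤ a → a ≤ M → M / 2 ≤ b → 0 ≤ c → c ≤ M / 2 →
      b ≤ a + c →
      (a ^ 2 + 2 * b * a) / ((c ^ 2 + 1) * b ^ (3 - ε)) ≤
        256 * M ^ (2 * ε) * (1 + c) ^ (-(3 + ε)) :=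
    fun h1 h2 h3 h4 h5 h6 h7 => stmt10_regP hε hε1 h1 h2 h3 h4 h5 h6 h7
  have regQ : ∀ {M a b c : ℝ}, 1 ≤ M → 0 ≤ a → a ≤ M → 1 ≤ b → M / 2 ≤ b → M / 2 ≤ c →
      b - a ≤ c →
      (a ^ 2 + 2 * b * a) / ((c ^ 2 + 1) * b ^ (3 - ε)) ≤
        2048 * M ^ (2 * ε) * ((1 + b) ^ (-(3 + ε)) + (1 + b) ^ (-(4 - ε))) :=
    fun h1 h2 h3 h4 h5 h6 h7 => stmt10_regQ hε hε1 h1 h2 h3 h4 h5 h6 h7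
  have key : (∫⁻ ξ, ENNReal.ofReal (f ξ)) ≤ ENNReal.ofReal (M ^ (2 * ε)) * K := by
    set W : ℝ≥0∞ := ENNReal.ofReal (M ^ (2 * ε)) with hWdef
    have hW1 : 1 ≤ W := by
      rw [hWdef]
      rw [ENNReal.one_le_ofReal]
      calc (1:ℝ) = 1 ^ (2 * ε) := (Real.one_rpow _).symm
        _ ≤ M ^ (2 * ε) := Real.rpow_le_rpow (by norm_num) hM1 (by linarith)
    set d := max (M / 2) 1 with hddef
    have hd1 : 1 ≤ d := le_max_right _ _
    have hdM2 : M / 2 ≤ d := le_max_left _ _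
    have hdM : d ≤ M := max_le (by linarith) hM1
    set A := ball (0 : EuclideanSpace ℝ (Fin 3)) d with hAdef
    set Bs := ball Ξ (M / 2) with hBsdef
    have hAm : MeasurableSet A := measurableSet_ball
    have hBsm : MeasurableSet Bs := measurableSet_ball
    -- pointwise bounds
    have hptA : ∀ ξ ∈ A, ENNReal.ofReal (f ξ) ≤ ENNReal.ofReal (12 * ‖ξ‖ ^ (ε - 3)) := by
      intro ξ hξ
      apply ENNReal.ofReal_le_ofReal
      have hξd : ‖ξ‖ < d := mem_ball_zero_iff.mp hξ
      apply regA hM1 (norm_nonneg Ξ) hMX (norm_nonneg ξ) (le_of_lt (hξd.trans_le hdM))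
      rcases le_or_gt M 2 with h | h
      · nlinarith [sq_nonneg ‖Ξ - ξ‖]
      · have hXM : M = ‖Ξ‖ := max_eq_right (by linarith)
        have hd2 : d = M / 2 := max_eq_left (by linarith)
        have ht : ‖Ξ‖ - ‖ξ‖ ≤ ‖Ξ - ξ‖ := norm_sub_norm_le Ξ ξ
        nlinarith [norm_nonneg (Ξ - ξ)]
    have hptP : ∀ ξ ∈ Aᶜ ∩ Bs, ENNReal.ofReal (f ξ) ≤
        ENNReal.ofReal (256 * M ^ (2 * ε) * (1 + ‖Ξ - ξ‖) ^ (-(3 + ε))) := by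
      intro ξ hξ
      apply ENNReal.ofReal_le_ofReal
      have hξd : d ≤ ‖ξ‖ := by
        have := hξ.1
        rw [hAdef, mem_compl_iff, mem_ball_zero_iff, not_lt] at this
        exact this
      have hcM : ‖Ξ - ξ‖ ≤ M / 2 := by
        have := hξ.2
        rw [hBsdef, mem_ball] at this
        rw [← dist_eq_norm Ξ ξ, dist_comm]
        exact this.le
      have hbac : ‖ξ‖ ≤ ‖Ξ‖ + ‖Ξ - ξ‖ := by
        calc ‖ξ‖ = ‖Ξ - (Ξ - ξ)‖ := by rw [sub_sub_cancel]
          _ ≤ ‖Ξ‖ + ‖Ξ - ξ‖ := norm_sub_le _ _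
      exact regP hM1 (norm_nonneg Ξ) hMX (le_trans hdM2 hξd) (norm_nonneg _) hcM hbac
    have hptQ : ∀ ξ ∈ Aᶜ ∩ Bsᶜ, ENNReal.ofReal (f ξ) ≤
        ENNReal.ofReal (2048 * M ^ (2 * ε) * ((1 + ‖ξ‖) ^ (-(3 + ε)) + (1 + ‖ξ‖) ^ (-(4 - ε)))) := by
      intro ξ hξ
      apply ENNReal.ofReal_le_ofReal
      have hξd : d ≤ ‖ξ‖ := by
        have := hξ.1
        rw [hAdef, mem_compl_iff, mem_ball_zero_iff, not_lt] at this
        exact this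
      have hcM : M / 2 ≤ ‖Ξ - ξ‖ := by
        have := hξ.2
        rw [hBsdef, mem_compl_iff, mem_ball, not_lt] at this
        rw [← dist_eq_norm Ξ ξ, dist_comm]
        exact this
      have hcb : ‖ξ‖ - ‖Ξ‖ ≤ ‖Ξ - ξ‖ := by
        rw [norm_sub_rev]
        exact norm_sub_norm_le ξ Ξ
      exact regQ hM1 (norm_nonneg Ξ) hMX (le_trans hd1 hξd) (le_trans hdM2 hξd) hcM hcb
    -- measurability helpers
    have hm1 : Measurable fun x : EuclideanSpace ℝ (Fin 3) =>
        ENNReal.ofReal ((1 + ‖x‖) ^ (-(3 + ε))) := by fun_prop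
    have hm2 : Measurable fun x : EuclideanSpace ℝ (Fin 3) =>
        ENNReal.ofReal ((1 + ‖x‖) ^ (-(4 - ε))) := by fun_prop
    -- region A bound
    have htrans : (∫⁻ ξ : EuclideanSpace ℝ (Fin 3),
        ENNReal.ofReal ((1 + ‖Ξ - ξ‖) ^ (-(3 + ε)))) = J1 := by
      have h : ∀ ξ : EuclideanSpace ℝ (Fin 3), ‖Ξ - ξ‖ = ‖ξ + -Ξ‖ := fun ξ => by
        rw [norm_sub_rev, sub_eq_add_neg]
      simp_rw [h]
      exact lintegral_add_right_eq_self
        (fun x => ENNReal.ofReal ((1 + ‖x‖) ^ (-(3 + ε)))) (-Ξ)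
    have boundA : (∫⁻ ξ in A, ENNReal.ofReal (f ξ)) ≤
        W * (ENNReal.ofReal 12 * B0 + ENNReal.ofReal 384 * J1) := by
      have first : (∫⁻ ξ in ball (0 : EuclideanSpace ℝ (Fin 3)) 1,
          ENNReal.ofReal (12 * ‖ξ‖ ^ (ε - 3))) = ENNReal.ofReal 12 * B0 := by
        simp_rw [ENNReal.ofReal_mul (by norm_num : (0:ℝ) ≤ 12)]
        rw [lintegral_const_mul' _ _ ENNReal.ofReal_ne_top, hB0def]
      have second : (∫⁻ ξ in A \ ball (0 : EuclideanSpace ℝ (Fin 3)) 1,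
          ENNReal.ofReal (12 * ‖ξ‖ ^ (ε - 3))) ≤ W * (ENNReal.ofReal 384 * J1) := by
        calc (∫⁻ ξ in A \ ball (0 : EuclideanSpace ℝ (Fin 3)) 1,
            ENNReal.ofReal (12 * ‖ξ‖ ^ (ε - 3)))
            ≤ ∫⁻ ξ in A \ ball (0 : EuclideanSpace ℝ (Fin 3)) 1,
              ENNReal.ofReal (384 * M ^ (2 * ε) * (1 + ‖ξ‖) ^ (-(3 + ε))) := by
              apply setLIntegral_mono' (hAm.diff measurableSet_ball)
              intro ξ hξ
              apply ENNReal.ofReal_le_ofReal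
              have h1 : 1 ≤ ‖ξ‖ := by
                have := hξ.2
                rwa [mem_ball_zero_iff, not_lt] at this
              have h2 : ‖ξ‖ ≤ M := le_of_lt ((mem_ball_zero_iff.mp hξ.1).trans_le hdM)
              exact regA2 hM1 h1 h2
          _ ≤ ∫⁻ ξ : EuclideanSpace ℝ (Fin 3),
              ENNReal.ofReal (384 * M ^ (2 * ε) * (1 + ‖ξ‖) ^ (-(3 + ε))) :=
              setLIntegral_le_lintegral _ _
          _ = ENNReal.ofReal (384 * M ^ (2 * ε)) * J1 := by
              simp_rw [ENNReal.ofReal_mul (by positivity : (0:ℝ) ≤ 384 * M ^ (2 * ε))]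
              rw [lintegral_const_mul' _ _ ENNReal.ofReal_ne_top, hJ1def]
          _ = W * (ENNReal.ofReal 384 * J1) := by
              rw [ENNReal.ofReal_mul (by norm_num : (0:ℝ) ≤ 384), hWdef]
              ring
      calc (∫⁻ ξ in A, ENNReal.ofReal (f ξ))
          ≤ ∫⁻ ξ in A, ENNReal.ofReal (12 * ‖ξ‖ ^ (ε - 3)) := setLIntegral_mono' hAm hptA
        _ ≤ (∫⁻ ξ in ball (0 : EuclideanSpace ℝ (Fin 3)) 1,
              ENNReal.ofReal (12 * ‖ξ‖ ^ (ε - 3))) +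
            (∫⁻ ξ in A \ ball (0 : EuclideanSpace ℝ (Fin 3)) 1,
              ENNReal.ofReal (12 * ‖ξ‖ ^ (ε - 3))) := by
            refine le_trans (lintegral_mono_set ?_) (lintegral_union_le _ _ _)
            intro x hx
            by_cases h : x ∈ ball (0 : EuclideanSpace ℝ (Fin 3)) 1
            · exact Or.inl h
            · exact Or.inr ⟨hx, h⟩
        _ ≤ W * (ENNReal.ofReal 12 * B0) + W * (ENNReal.ofReal 384 * J1) := by
            apply add_le_add _ second
            rw [first]
            calc ENNReal.ofReal 12 * B0 = 1 * (ENNReal.ofReal 12 * B0) := (one_mul _).symm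
              _ ≤ W * (ENNReal.ofReal 12 * B0) := mul_le_mul_left hW1 _
        _ = W * (ENNReal.ofReal 12 * B0 + ENNReal.ofReal 384 * J1) := by ring
    have boundP : (∫⁻ ξ in Aᶜ ∩ Bs, ENNReal.ofReal (f ξ)) ≤ W * (ENNReal.ofReal 256 * J1) := by
      calc (∫⁻ ξ in Aᶜ ∩ Bs, ENNReal.ofReal (f ξ))
          ≤ ∫⁻ ξ in Aᶜ ∩ Bs,
              ENNReal.ofReal (256 * M ^ (2 * ε) * (1 + ‖Ξ - ξ‖) ^ (-(3 + ε))) :=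
            setLIntegral_mono' (hAm.compl.inter hBsm) hptP
        _ ≤ ∫⁻ ξ : EuclideanSpace ℝ (Fin 3),
              ENNReal.ofReal (256 * M ^ (2 * ε) * (1 + ‖Ξ - ξ‖) ^ (-(3 + ε))) :=
            setLIntegral_le_lintegral _ _
        _ = ENNReal.ofReal (256 * M ^ (2 * ε)) * J1 := by
            simp_rw [ENNReal.ofReal_mul (by positivity : (0:ℝ) ≤ 256 * M ^ (2 * ε))]
            rw [lintegral_const_mul' _ _ ENNReal.ofReal_ne_top, htrans]
        _ = W * (ENNReal.ofReal 256 * J1) := by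
            rw [ENNReal.ofReal_mul (by norm_num : (0:ℝ) ≤ 256), hWdef]
            ring
    have boundQ : (∫⁻ ξ in Aᶜ ∩ Bsᶜ, ENNReal.ofReal (f ξ)) ≤
        W * (ENNReal.ofReal 2048 * (J1 + J2)) := by
      calc (∫⁻ ξ in Aᶜ ∩ Bsᶜ, ENNReal.ofReal (f ξ))
          ≤ ∫⁻ ξ in Aᶜ ∩ Bsᶜ, ENNReal.ofReal (2048 * M ^ (2 * ε) *
              ((1 + ‖ξ‖) ^ (-(3 + ε)) + (1 + ‖ξ‖) ^ (-(4 - ε)))) :=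
            setLIntegral_mono' (hAm.compl.inter hBsm.compl) hptQ
        _ ≤ ∫⁻ ξ : EuclideanSpace ℝ (Fin 3), ENNReal.ofReal (2048 * M ^ (2 * ε) *
              ((1 + ‖ξ‖) ^ (-(3 + ε)) + (1 + ‖ξ‖) ^ (-(4 - ε)))) :=
            setLIntegral_le_lintegral _ _
        _ = ENNReal.ofReal (2048 * M ^ (2 * ε)) * (J1 + J2) := by
            simp_rw [ENNReal.ofReal_mul (by positivity : (0:ℝ) ≤ 2048 * M ^ (2 * ε))]
            rw [lintegral_const_mul' _ _ ENNReal.ofReal_ne_top]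
            congr 1
            have hsplit : ∀ ξ : EuclideanSpace ℝ (Fin 3),
                ENNReal.ofReal ((1 + ‖ξ‖) ^ (-(3 + ε)) + (1 + ‖ξ‖) ^ (-(4 - ε))) =
                  ENNReal.ofReal ((1 + ‖ξ‖) ^ (-(3 + ε))) +
                    ENNReal.ofReal ((1 + ‖ξ‖) ^ (-(4 - ε))) := fun ξ =>
              ENNReal.ofReal_add (by positivity) (by positivity)
            simp_rw [hsplit]
            rw [lintegral_add_left hm1, hJ1def, hJ2def]
        _ = W * (ENNReal.ofReal 2048 * (J1 + J2)) := by
            rw [ENNReal.ofReal_mul (by norm_num : (0:ℝ) ≤ 2048), hWdef]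
            ring
    calc (∫⁻ ξ, ENNReal.ofReal (f ξ))
        = ∫⁻ ξ in univ, ENNReal.ofReal (f ξ) := (setLIntegral_univ _).symm
      _ ≤ ∫⁻ ξ in A ∪ ((Aᶜ ∩ Bs) ∪ (Aᶜ ∩ Bsᶜ)), ENNReal.ofReal (f ξ) := by
          apply lintegral_mono_set
          intro x _
          by_cases hx : x ∈ A
          · exact Or.inl hx
          · by_cases hx2 : x ∈ Bs
            · exact Or.inr (Or.inl ⟨hx, hx2⟩)
            · exact Or.inr (Or.inr ⟨hx, hx2⟩)
      _ ≤ (∫⁻ ξ in A, ENNReal.ofReal (f ξ)) +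
            ((∫⁻ ξ in Aᶜ ∩ Bs, ENNReal.ofReal (f ξ)) +
              (∫⁻ ξ in Aᶜ ∩ Bsᶜ, ENNReal.ofReal (f ξ))) :=
          le_trans (lintegral_union_le _ _ _) (add_le_add le_rfl (lintegral_union_le _ _ _))
      _ ≤ W * (ENNReal.ofReal 12 * B0 + ENNReal.ofReal 384 * J1) +
            (W * (ENNReal.ofReal 256 * J1) + W * (ENNReal.ofReal 2048 * (J1 + J2))) :=
          add_le_add boundA (add_le_add boundP boundQ)
      _ = W * K := by rw [hKdef]; ring
  have h2e : (0:ℝ) ≤ 2 * ε := by linarith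
  have hMrp : M ^ (2 * ε) ≤ (1 + ‖Ξ‖) ^ (2 * ε) := Real.rpow_le_rpow hM0.le hM1X h2e
  calc (∫⁻ ξ, ENNReal.ofReal (f ξ)).toReal
      ≤ (ENNReal.ofReal (M ^ (2 * ε)) * K).toReal :=
        ENNReal.toReal_mono (ENNReal.mul_ne_top ENNReal.ofReal_ne_top hKfin) key
    _ = M ^ (2 * ε) * K.toReal := by
        rw [ENNReal.toReal_mul, ENNReal.toReal_ofReal (by positivity)]
    _ ≤ (K.toReal + 1) * (1 + ‖Ξ‖) ^ (2 * ε) := by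
        have h1 : (0:ℝ) ≤ K.toReal := ENNReal.toReal_nonneg
        nlinarith [Real.rpow_nonneg hM0.le (2 * ε), hMrp]
end
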